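/- Over a flat priority alphabet (at most one letter per nonzero priority), for words u, v that end in the same letter a, u block-smaller-than v implies u priority-smaller-than v. -/

import Mathlib

/-!
Induction on the level `p`: for `v` of priority at most `p`, `BlockLE prio p u v` makes `u`
priority-embed into a prefix of `v`, and into all of `v` when both words end in the same letter.
In the subword cases every letter of `v` has priority at most that of every letter of `u`, so a
subword embedding is a priority embedding once `v` is cut after its last matched letter.
In the block case `φ` cuts `v` into segments `v_{φ i} y ⋯ y v_{φ(i+1)-1} y`. The block `u_i` embeds
into a prefix of `v_{φ i}`; by flatness the separator following `u_i` is the letter `y` closing the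
segment, and it absorbs the rest of the segment, all of priority at most `p + 1`.
-/

/-- The priority embedding underlying the priority order: `u = u₁…u_k`,
`v = v₁u₁v₂u₂…v_ku_k` where each `vᵢ` consists of letters of priority at most
that of `uᵢ`. -/
inductive PrioEmb {α : Type*} (prio : α → ℕ) : List α → List α → Prop
  | nil : PrioEmb prio [] []
  | cons (a : α) {u v : List α} (w : List α) (hw : ∀ b ∈ w, prio b ≤ prio a)
      (h : PrioEmb prio u v) : PrioEmb prio (a :: u) (w ++ a :: v)

/-- The priority order: `u ⊑ v` iff `u = ε`, or `u = u₁…u_k` and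
`v = v₁u₁…v_ku_k` with each `vᵢ` over letters of priority at most that of `uᵢ`. -/
def PrioLE {α : Type*} (prio : α → ℕ) (u v : List α) : Prop :=
  u = [] ∨ PrioEmb prio u v

/-- Glue together a decomposition into blocks and separator letters:
`glue [(u₀,x₀),…,(u_{n-1},x_{n-1})] u_n = u₀x₀u₁x₁⋯x_{n-1}u_n`. -/
def glue {α : Type*} (ps : List (List α × α)) (last : List α) : List α :=
  (ps.map (fun p => p.1 ++ [p.2])).flatten ++ last

/-- The `i`-th block of a decomposition (`last` for the final index). -/
def blockAt {α : Type*} (ps : List (List α × α)) (last : List α) (i : ℕ) :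
    List α :=
  if h : i < ps.length then (ps.get ⟨i, h⟩).1 else last

/-- The blockSegment `v_i y_i v_{i+1} ⋯ y_{j-1} v_j` of a decomposition. -/
def blockSegment {α : Type*} (ps : List (List α × α)) (last : List α) (i j : ℕ) :
    List α :=
  glue ((ps.take j).drop i) (blockAt ps last j)

/-- The block order at priority level `p`: at level `0` (a single priority) it
is the subword order; at level `p+1`, either both words consist solely of
letters of priority `p+1` and are related by the subword order, or both words
are split at their priority-`p+1` letters into sub-blocks of lower priority and
there is a strictly increasing witness block map `φ` sending the first block to
the first and the last block to the last, such that blocks embed recursively in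
the block order and each separator letter embeds as a subword into the
corresponding blockSegment of the larger word. -/
def BlockLE {α : Type*} (prio : α → ℕ) : ℕ → List α → List α → Prop
  | 0, u, v => u.Sublist v
  | (p+1), u, v =>
      ((∀ a ∈ u, prio a = p + 1) ∧ (∀ a ∈ v, prio a = p + 1) ∧ u.Sublist v) ∨
      ∃ (us : List (List α × α)) (ulast : List α)
        (vs : List (List α × α)) (vlast : List α) (φ : ℕ → ℕ),
        u = glue us ulast ∧ v = glue vs vlast ∧
        (∀ q ∈ us, prio q.2 = p + 1 ∧ ∀ a ∈ q.1, prio a ≤ p) ∧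
        (∀ a ∈ ulast, prio a ≤ p) ∧
        (∀ q ∈ vs, prio q.2 = p + 1 ∧ ∀ a ∈ q.1, prio a ≤ p) ∧
        (∀ a ∈ vlast, prio a ≤ p) ∧
        (∀ i j, i < j → j ≤ us.length → φ i < φ j) ∧
        φ 0 = 0 ∧ φ us.length = vs.length ∧
        (∀ i ≤ us.length,
          BlockLE prio p (blockAt us ulast i) (blockAt vs vlast (φ i))) ∧
        (∀ i (h : i < us.length),
          [(us.get ⟨i, h⟩).2].Sublist (blockSegment vs vlast (φ i) (φ (i + 1))))

namespace PrioEmb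

variable {α : Type*} {prio : α → ℕ}

theorem append {u₁ v₁ u₂ v₂ : List α} (h₁ : PrioEmb prio u₁ v₁) (h₂ : PrioEmb prio u₂ v₂) :
    PrioEmb prio (u₁ ++ u₂) (v₁ ++ v₂) := by
  induction h₁ with
  | nil => simpa using h₂
  | cons a w hw _ ih => simpa using cons a w hw ih

theorem singleton_append {a : α} {w : List α} (hw : ∀ b ∈ w, prio b ≤ prio a) :
    PrioEmb prio [a] (w ++ [a]) :=
  cons a w hw nil

theorem cons_right {a b : α} {u v : List α} (h : PrioEmb prio (a :: u) v)
    (hb : prio b ≤ prio a) : PrioEmb prio (a :: u) (b :: v) := by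
  cases h with
  | cons _ w hw h =>
    simpa using cons a (b :: w) (by simpa [hb] using hw) h

theorem append_of_getLast? {u v w : List α} {c : α} (h : PrioEmb prio u v)
    (hw : ∀ b ∈ w, prio b ≤ prio c) (hc : w.getLast? = some c) :
    PrioEmb prio (u ++ [c]) (v ++ w) := by
  rw [← List.dropLast_append_getLast? c hc]
  exact h.append (singleton_append fun b hb => hw b (List.dropLast_subset w hb))

end PrioEmb

section Sublist

variable {α : Type*} {prio : α → ℕ}

theorem prioEmb_concat_of_sublist {u v : List α} {a : α} (h : u.Sublist v)
    (hp : ∀ b ∈ v ++ [a], ∀ c ∈ u ++ [a], prio b ≤ prio c) :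
    PrioEmb prio (u ++ [a]) (v ++ [a]) := by
  induction h with
  | slnil => exact PrioEmb.singleton_append (by simp)
  | @cons u v b _ ih =>
    obtain ⟨c, t, hct⟩ := List.exists_cons_of_ne_nil (List.concat_ne_nil a u)
    have hb : prio b ≤ prio c := hp b (by simp) c (by simp [hct])
    rw [hct] at ih ⊢
    exact (ih fun x hx y hy => hp x (by simp_all) y (by simp_all)).cons_right hb
  | @cons_cons u v b _ ih =>
    exact PrioEmb.cons b [] (by simp) (ih fun x hx y hy => hp x (by simp_all) y (by simp_all))

theorem List.Sublist.prioEmb_of_getLast? {u v : List α} (h : u.Sublist v)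
    (hp : ∀ b ∈ v, ∀ c ∈ u, prio b ≤ prio c) {a : α} (hu : u.getLast? = some a)
    (hv : v.getLast? = some a) : PrioEmb prio u v := by
  rw [← List.dropLast_append_getLast? a hu, ← List.dropLast_append_getLast? a hv] at h hp ⊢
  exact prioEmb_concat_of_sublist ((List.append_sublist_append_right _).mp h) hp

theorem List.Sublist.exists_prefix_prioEmb {u v : List α} (h : u.Sublist v)
    (hp : ∀ b ∈ v, ∀ c ∈ u, prio b ≤ prio c) : ∃ v₁, v₁ <+: v ∧ PrioEmb prio u v₁ := by
  rcases List.eq_nil_or_concat' u with rfl | ⟨u', a, rfl⟩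
  · exact ⟨[], List.nil_prefix, PrioEmb.nil⟩
  obtain ⟨x, y, rfl, hx, hy⟩ := List.append_sublist_iff.mp h
  obtain ⟨y₁, y₂, rfl⟩ := List.append_of_mem (List.singleton_sublist.mp hy)
  refine ⟨x ++ y₁ ++ [a], by simp, ?_⟩
  have hsub : (u' ++ [a]).Sublist (x ++ y₁ ++ [a]) :=
    (hx.trans (List.sublist_append_left x y₁)).append (List.Sublist.refl [a])
  refine hsub.prioEmb_of_getLast? (fun b hb c hc => hp b ?_ c hc) List.getLast?_concat
    List.getLast?_concat
  simp only [List.mem_append, List.mem_cons] at hb ⊢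
  tauto

end Sublist

section Glue

variable {α : Type*}

theorem glue_cons (q : List α × α) (ps : List (List α × α)) (last : List α) :
    glue (q :: ps) last = q.1 ++ q.2 :: glue ps last := by
  simp [glue]

theorem glue_append (ps qs : List (List α × α)) (last : List α) :
    glue (ps ++ qs) last = glue ps [] ++ glue qs last := by
  simp [glue]

theorem glue_eq_append (ps : List (List α × α)) (last : List α) :
    glue ps last = glue ps [] ++ last := by
  simp [glue]

theorem mem_glue {ps : List (List α × α)} {last : List α} {x : α} :
    x ∈ glue ps last ↔ (∃ q ∈ ps, x ∈ q.1 ∨ x = q.2) ∨ x ∈ last := by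
  simp [glue, or_comm]

theorem getLast?_glue_nil (ps : List (List α × α)) :
    (glue ps []).getLast? = ps.getLast?.map Prod.snd := by
  induction ps using List.reverseRecOn with
  | nil => rfl
  | append_singleton ps q _ => simp [glue]

theorem glue_take_add_one {ps : List (List α × α)} {i : ℕ} (hi : i < ps.length) :
    glue (ps.take (i + 1)) [] = glue (ps.take i) [] ++ (ps[i].1 ++ [ps[i].2]) := by
  rw [List.take_add_one, List.getElem?_eq_getElem hi, Option.toList_some, glue_append]
  simp [glue]

theorem glue_take_eq_append_drop (ps : List (List α × α)) {i j : ℕ} (hij : i ≤ j) :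
    glue (ps.take j) [] = glue (ps.take i) [] ++ glue ((ps.take j).drop i) [] := by
  conv_lhs => rw [← List.take_append_drop i (ps.take j)]
  rw [glue_append, List.take_take, min_eq_left hij]

theorem blockAt_of_lt {ps : List (List α × α)} (last : List α) {i : ℕ} (hi : i < ps.length) :
    blockAt ps last i = ps[i].1 := by
  simp [blockAt, hi]

theorem blockAt_length (ps : List (List α × α)) (last : List α) :
    blockAt ps last ps.length = last := by
  simp [blockAt]

end Glue

section BlockLE

variable {α : Type*} {prio : α → ℕ}

theorem prio_eq_of_getLast?_glue_nil {ps : List (List α × α)} {P : ℕ}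
    (hps : ∀ q ∈ ps, prio q.2 = P) {a : α} (ha : (glue ps []).getLast? = some a) :
    prio a = P := by
  rw [getLast?_glue_nil, Option.map_eq_some_iff] at ha
  obtain ⟨q, hq, rfl⟩ := ha
  exact hps q (List.mem_of_getLast? hq)

theorem prioEmb_concat_glue_cons (flat : ∀ a b : α, prio a = prio b → prio a ≠ 0 → a = b)
    {p : ℕ} {b : List α × α} {K : List (List α × α)}
    (hbK : ∀ r ∈ b :: K, prio r.2 = p + 1 ∧ ∀ x ∈ r.1, prio x ≤ p)
    {u w : List α} {c : α} (hc : prio c = p + 1) (hw : w <+: b.1) (hu : PrioEmb prio u w) :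
    PrioEmb prio (u ++ [c]) (glue (b :: K) []) := by
  obtain ⟨w₂, hw₂⟩ := hw
  set R := w₂ ++ b.2 :: glue K []
  have hsplit : glue (b :: K) [] = w ++ R := by simp [R, glue_cons, ← hw₂]
  have hlast : R.getLast? = some c := by
    obtain ⟨d, hd⟩ : ∃ d, R.getLast? = some d :=
      ⟨R.getLast (by simp [R]), List.getLast?_eq_getLast_of_ne_nil _⟩
    have hgl : (glue (b :: K) []).getLast? = some d := by
      rw [hsplit, List.getLast?_append, hd, Option.some_or]
    have hd_prio := prio_eq_of_getLast?_glue_nil (fun r hr => (hbK r hr).1) hgl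
    rw [hd, flat d c (by rw [hd_prio, hc]) (by omega)]
  rw [hsplit]
  refine hu.append_of_getLast? (fun x hx => ?_) hlast
  have hx : x ∈ glue (b :: K) [] := hsplit ▸ List.mem_append_right w hx
  rcases mem_glue.mp hx with ⟨q, hq, hxq | rfl⟩ | hx
  · have := (hbK q hq).2 x hxq
    omega
  · exact ((hbK q hq).1.trans hc.symm).le
  · simp at hx

theorem prioEmb_glue_take (flat : ∀ a b : α, prio a = prio b → prio a ≠ 0 → a = b) {p : ℕ}
    (ih : ∀ u v : List α, (∀ b ∈ v, prio b ≤ p) → BlockLE prio p u v →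
      ∃ v₁, v₁ <+: v ∧ PrioEmb prio u v₁)
    {us vs : List (List α × α)} {ulast vlast : List α} {φ : ℕ → ℕ}
    (hus : ∀ q ∈ us, prio q.2 = p + 1)
    (hvs : ∀ q ∈ vs, prio q.2 = p + 1 ∧ ∀ a ∈ q.1, prio a ≤ p)
    (hmono : ∀ i j, i < j → j ≤ us.length → φ i < φ j) (h0 : φ 0 = 0)
    (hk : φ us.length = vs.length)
    (hblocks : ∀ i ≤ us.length, BlockLE prio p (blockAt us ulast i) (blockAt vs vlast (φ i))) :
    ∀ i ≤ us.length, PrioEmb prio (glue (us.take i) []) (glue (vs.take (φ i)) []) := by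
  intro i hi
  induction i with
  | zero => simpa [h0, glue] using PrioEmb.nil
  | succ i ihi =>
    have hφ : φ i < φ (i + 1) := hmono i (i + 1) (Nat.lt_add_one i) hi
    have hφk : φ (i + 1) ≤ vs.length := by
      rcases hi.lt_or_eq with hi' | hi'
      · exact hk ▸ (hmono _ _ hi' le_rfl).le
      · rw [hi', hk]
    have hφvs : φ i < vs.length := hφ.trans_le hφk
    rw [glue_take_add_one (by omega), glue_take_eq_append_drop vs hφ.le]
    refine (ihi (by omega)).append ?_
    set L := (vs.take (φ (i + 1))).drop (φ i)
    have hL : L = vs[φ i] :: (vs.take (φ (i + 1))).drop (φ i + 1) := by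
      simp [L, List.drop_eq_getElem_cons (show φ i < (vs.take (φ (i + 1))).length by simp; omega)]
    have hLvs : ∀ r ∈ L, r ∈ vs := fun r hr => List.take_subset _ _ (List.drop_subset _ _ hr)
    obtain ⟨w, hw, hemb⟩ := ih _ _ (hvs _ (List.getElem_mem hφvs)).2
      (by simpa [blockAt_of_lt, hφvs, show i < us.length by omega] using hblocks i (by omega))
    rw [hL] at hLvs ⊢
    exact prioEmb_concat_glue_cons flat (fun r hr => hvs r (hLvs r hr))
      (hus _ (List.getElem_mem _)) hw hemb

/-- The last letter of a glued word is a separator (priority `p + 1`) when its final block is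
empty and a letter of priority at most `p` otherwise, so equal last letters force the final
blocks to be both empty or both nonempty. -/
theorem prioEmb_glue_of_getLast? {p : ℕ} {us vs : List (List α × α)} {ulast vlast : List α}
    (hus : ∀ q ∈ us, prio q.2 = p + 1) (hvs : ∀ q ∈ vs, prio q.2 = p + 1)
    (hul : ∀ x ∈ ulast, prio x ≤ p) (hvl : ∀ x ∈ vlast, prio x ≤ p)
    (hUV : PrioEmb prio (glue us []) (glue vs []))
    (hlast : ∀ a, ulast.getLast? = some a → vlast.getLast? = some a → PrioEmb prio ulast vlast)
    {a : α} (hu : (glue us ulast).getLast? = some a) (hv : (glue vs vlast).getLast? = some a) :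
    PrioEmb prio (glue us ulast) (glue vs vlast) := by
  rw [glue_eq_append us] at hu ⊢
  rw [glue_eq_append vs] at hv ⊢
  rcases List.eq_nil_or_concat' ulast with rfl | ⟨U, x, rfl⟩ <;>
    rcases List.eq_nil_or_concat' vlast with rfl | ⟨V, y, rfl⟩
  · simpa using hUV
  · have := prio_eq_of_getLast?_glue_nil hus (by simpa using hu)
    have := hvl a (by simp_all)
    omega
  · have := prio_eq_of_getLast?_glue_nil hvs (by simpa using hv)
    have := hul a (by simp_all)
    omega
  · exact hUV.append (hlast a (by simpa using hu) (by simpa using hv))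

theorem BlockLE.prioEmb (flat : ∀ a b : α, prio a = prio b → prio a ≠ 0 → a = b) {p : ℕ}
    {u v : List α} (hv : ∀ b ∈ v, prio b ≤ p) (h : BlockLE prio p u v) :
    (∃ v₁, v₁ <+: v ∧ PrioEmb prio u v₁) ∧
      ∀ a, u.getLast? = some a → v.getLast? = some a → PrioEmb prio u v := by
  induction p generalizing u v with
  | zero =>
    have hp : ∀ b ∈ v, ∀ c ∈ u, prio b ≤ prio c := fun b hb c _ => (hv b hb).trans (Nat.zero_le _)
    exact ⟨h.exists_prefix_prioEmb hp, fun a => h.prioEmb_of_getLast? hp⟩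
  | succ p ih =>
    rcases h with ⟨hu_eq, hv_eq, hsub⟩ |
      ⟨us, ulast, vs, vlast, φ, rfl, rfl, hus, hul, hvs, hvl, hmono, h0, hk, hblocks, -⟩
    · have hp : ∀ b ∈ v, ∀ c ∈ u, prio b ≤ prio c := fun b hb c hc => by
        rw [hv_eq b hb, hu_eq c hc]
      exact ⟨hsub.exists_prefix_prioEmb hp, fun a => hsub.prioEmb_of_getLast? hp⟩
    have hUV : PrioEmb prio (glue us []) (glue vs []) := by
      simpa [hk] using prioEmb_glue_take flat (fun u v hv h => (ih hv h).1)
        (fun q hq => (hus q hq).1) hvs hmono h0 hk hblocks _ le_rfl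
    obtain ⟨⟨w, hw, hemb⟩, hlast⟩ := ih hvl (by simpa [blockAt_length, hk] using hblocks _ le_rfl)
    refine ⟨⟨glue vs [] ++ w, ?_, ?_⟩, fun a => ?_⟩
    · rw [glue_eq_append vs vlast]
      exact (List.prefix_append_right_inj _).mpr hw
    · rw [glue_eq_append us ulast]
      exact hUV.append hemb
    · exact prioEmb_glue_of_getLast? (fun q hq => (hus q hq).1) (fun q hq => (hvs q hq).1)
        hul hvl hUV hlast

end BlockLE

/-- Over a flat priority alphabet (at most one letter per nonzero priority),
for words ending in the same letter, the block order refines the priority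
order. -/
theorem blockLE_prioLE_of_flat {α : Type*} (prio : α → ℕ) (d : ℕ)
    (hd : ∀ a : α, prio a ≤ d)
    (flat : ∀ a b : α, prio a = prio b → prio a ≠ 0 → a = b)
    (u v : List α) (a : α)
    (h : BlockLE prio d (u ++ [a]) (v ++ [a])) :
    PrioLE prio (u ++ [a]) (v ++ [a]) :=
  Or.inr <| (BlockLE.prioEmb flat (fun b _ => hd b) h).2 a List.getLast?_concat
    List.getLast?_concat
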